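/- arXiv:1607.05893 — 2 statements merged into one kernel-verified Lean document; each statement's English description precedes it below -/
import Mathlib

section
/- Let Φ(x, y) := 1/(4π‖x − y‖) for x ≠ y in ℝ³. For q ∈ ℝ², write q̂ := (q₁, q₂, 0) ∈ ℝ³. Let q ∈ ℝ², h > 0, and x ∈ ℝ³ with ‖x − q̂‖ > 2h. Then |(1/(πh²))·∫_{B(q,h)} Φ(x, ŷ) dy − Φ(x, q̂)| ≤ h/(π‖x − q̂‖²), where B(q,h) ⊂ ℝ² is the open Euclidean disk of radius h centered at q and the integral is with respect to two-dimensional Lebesgue measure. -/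
open Real MeasureTheory Metric

noncomputable section

/-- Embedding of a boundary point `q ∈ ℝ²` into the boundary plane `{x₃ = 0}`
of the lower half-space in `ℝ³`. -/
def hat (q : EuclideanSpace ℝ (Fin 2)) : EuclideanSpace ℝ (Fin 3) :=
  WithLp.toLp 2 ![q 0, q 1, 0]

/-- The fundamental solution of the Laplace equation in three dimensions. -/
def Phi (x y : EuclideanSpace ℝ (Fin 3)) : ℝ := 1 / (4 * Real.pi * ‖x - y‖)

lemma norm_hat_sub (p q : EuclideanSpace ℝ (Fin 2)) : ‖hat p - hat q‖ = ‖p - q‖ := by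
  simp only [EuclideanSpace.norm_eq, hat]
  rw [Fin.sum_univ_three, Fin.sum_univ_two]
  simp [PiLp.sub_apply]

lemma hat_cont : Continuous hat := by
  unfold hat
  apply (PiLp.continuous_toLp 2 _).comp
  apply continuous_pi (f := fun (y : EuclideanSpace ℝ (Fin 2)) => (![y 0, y 1, 0] : Fin 3 → ℝ))
  intro i
  fin_cases i
  · exact (PiLp.continuous_apply 2 _ (0 : Fin 2))
  · exact (PiLp.continuous_apply 2 _ (1 : Fin 2))
  · exact continuous_const

lemma vol2 (q : EuclideanSpace ℝ (Fin 2)) (h : ℝ) (hh : 0 < h) :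
    (volume (ball q h)).toReal = π * h ^ 2 := by
  rw [EuclideanSpace.volume_ball]
  simp [Fintype.card_fin]
  rw [show (1:ℝ) + 1 = 2 by norm_num, Real.Gamma_two]
  rw [ENNReal.toReal_ofReal hh.le, ENNReal.toReal_ofReal (by positivity)]
  rw [Real.sq_sqrt Real.pi_pos.le]
  ring

/-- the averaged potential of a uniform charge on a small disk
electrode is close to the point-electrode potential. -/
theorem disk_average_potential_estimate
    (q : EuclideanSpace ℝ (Fin 2)) (h : ℝ) (hh : 0 < h)
    (x : EuclideanSpace ℝ (Fin 3)) (hx : 2 * h < ‖x - hat q‖) :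
    |(1 / (Real.pi * h ^ 2)) * (∫ y in Metric.ball q h, Phi x (hat y)) - Phi x (hat q)|
      ≤ h / (Real.pi * ‖x - hat q‖ ^ 2) := by
  set b := ‖x - hat q‖ with hb
  have hbpos : 0 < b := lt_trans (by positivity) hx
  set C : ℝ := h / (2 * π * b ^ 2) with hC
  -- pointwise estimate
  have key : ∀ y ∈ ball q h, |Phi x (hat y) - Phi x (hat q)| ≤ C := by
    intro y hy
    set a := ‖x - hat y‖ with ha
    have hdiff : |a - b| ≤ ‖y - q‖ := by
      have := abs_norm_sub_norm_le (x - hat y) (x - hat q)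
      rw [show (x - hat y) - (x - hat q) = -(hat y - hat q) by abel, norm_neg,
        norm_hat_sub] at this
      exact this
    have hyq : ‖y - q‖ < h := by rwa [← dist_eq_norm, ← mem_ball]
    have habs : |a - b| ≤ h := hdiff.trans hyq.le
    have ha2 : b / 2 ≤ a := by
      have := abs_le.1 habs
      nlinarith
    have hapos : 0 < a := lt_of_lt_of_le (by positivity) ha2
    have heq : Phi x (hat y) - Phi x (hat q) = (b - a) / (4 * π * a * b) := by
      unfold Phi
      rw [← ha, ← hb]
      field_simp
    have h4 : (0:ℝ) < 4 * π * a * b :=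
      mul_pos (mul_pos (mul_pos (by norm_num) Real.pi_pos) hapos) hbpos
    rw [heq, abs_div, abs_of_pos h4, hC]
    apply div_le_div₀ hh.le _ (by positivity) _
    · rw [abs_sub_comm] at habs; exact habs
    · nlinarith [mul_nonneg (mul_nonneg Real.pi_pos.le hbpos.le)
        (by linarith : (0:ℝ) ≤ a - b / 2)]
  -- measurability / integrability
  have hm : Measurable (fun y : EuclideanSpace ℝ (Fin 2) => Phi x (hat y)) := by
    unfold Phi
    apply Measurable.div measurable_const
    exact (measurable_const.mul ((continuous_const.sub hat_cont).norm.measurable))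
  have hfin : volume (ball q h) < ⊤ := measure_ball_lt_top
  have hI : IntegrableOn (fun y => Phi x (hat y)) (ball q h) volume := by
    apply Measure.integrableOn_of_bounded hfin.ne hm.aestronglyMeasurable
      (M := C + |Phi x (hat q)|)
    rw [ae_restrict_iff' measurableSet_ball]
    filter_upwards with y hy
    calc ‖Phi x (hat y)‖ = |Phi x (hat y) - Phi x (hat q) + Phi x (hat q)| := by
          rw [Real.norm_eq_abs]; ring_nf
      _ ≤ |Phi x (hat y) - Phi x (hat q)| + |Phi x (hat q)| := abs_add_le _ _
      _ ≤ C + |Phi x (hat q)| := by gcongr; exact key y hy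
  have hvol := vol2 q h hh
  have hsub : ∫ y in ball q h, (Phi x (hat y) - Phi x (hat q)) =
      (∫ y in ball q h, Phi x (hat y)) - (π * h ^ 2) * Phi x (hat q) := by
    rw [integral_sub hI (integrableOn_const hfin.ne)]
    rw [setIntegral_const, measureReal_def, hvol, smul_eq_mul]
  have hb1 : |(∫ y in ball q h, Phi x (hat y)) - (π * h ^ 2) * Phi x (hat q)|
      ≤ C * (π * h ^ 2) := by
    rw [← hsub, ← Real.norm_eq_abs, ← hvol]
    exact norm_setIntegral_le_of_norm_le_const hfin
      (fun y hy => by rw [Real.norm_eq_abs]; exact key y hy)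
  have hph : (0:ℝ) < π * h ^ 2 := by positivity
  have hsplit : (1 / (π * h ^ 2)) * (∫ y in ball q h, Phi x (hat y)) - Phi x (hat q)
      = (1 / (π * h ^ 2)) * ((∫ y in ball q h, Phi x (hat y)) - (π * h ^ 2) * Phi x (hat q)) := by
    field_simp
  calc |(1 / (π * h ^ 2)) * (∫ y in ball q h, Phi x (hat y)) - Phi x (hat q)|
      = (1 / (π * h ^ 2)) * |(∫ y in ball q h, Phi x (hat y)) - (π * h ^ 2) * Phi x (hat q)| := by
        rw [hsplit, abs_mul, abs_of_pos (show (0:ℝ) < 1 / (π * h ^ 2) by positivity)]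
    _ ≤ (1 / (π * h ^ 2)) * (C * (π * h ^ 2)) := by gcongr
    _ = C := by field_simp
    _ ≤ h / (π * b ^ 2) := by
        rw [hC]
        apply div_le_div_of_nonneg_left hh.le (by positivity)
        nlinarith [Real.pi_pos]
end
end

section
/- Let Φ(x, y) := 1/(4π‖x − y‖) for x ≠ y in ℝ³. For q ∈ ℝ², write q̂ := (q₁, q₂, 0) ∈ ℝ³. Let q ∈ ℝ², h > 0, and let η : ℝ² → ℝ be Lebesgue integrable with support contained in the closed disk of radius h centered at q and with ∫_{ℝ²} η(y) dy = 0. Then for every x ∈ ℝ³ with ‖x − q̂‖ > 2h, |∫_{ℝ²} Φ(x, ŷ)·η(y) dy| ≤ (h/(π‖x − q̂‖²))·∫_{ℝ²} |η(y)| dy. -/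
open Real MeasureTheory Metric

noncomputable section

lemma hat_norm (y z : EuclideanSpace ℝ (Fin 2)) : ‖hat y - hat z‖ = ‖y - z‖ := by
  simp only [EuclideanSpace.norm_eq, hat, PiLp.toLp_apply, Fin.sum_univ_three, Fin.sum_univ_two,
    PiLp.sub_apply, Matrix.cons_val_zero, Matrix.cons_val_one, Matrix.head_cons,
    Matrix.cons_val_two, Matrix.tail_cons, sub_zero, sub_self]
  norm_num

lemma hat_meas : Measurable hat := by
  have h1 : Measurable (fun q : EuclideanSpace ℝ (Fin 2) => (![q 0, q 1, 0] : Fin 3 → ℝ)) := by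
    refine measurable_pi_lambda _ fun i => ?_
    fin_cases i <;> simp
    · exact (EuclideanSpace.proj (0 : Fin 2)).continuous.measurable
    · exact (EuclideanSpace.proj (1 : Fin 2)).continuous.measurable
  exact (WithLp.measurable_toLp 2 (Fin 3 → ℝ)).comp h1

/-- single layer potential estimate for a zero-mean density
supported on a small disk electrode. -/
theorem zero_mean_layer_potential_estimate
    (q : EuclideanSpace ℝ (Fin 2)) (h : ℝ) (hh : 0 < h)
    (η : EuclideanSpace ℝ (Fin 2) → ℝ)
    (hint : Integrable η)
    (hsupp : Function.support η ⊆ Metric.closedBall q h)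
    (hmean : ∫ y, η y = 0) :
    ∀ x : EuclideanSpace ℝ (Fin 3), 2 * h < ‖x - hat q‖ →
      |∫ y, Phi x (hat y) * η y|
        ≤ (h / (Real.pi * ‖x - hat q‖ ^ 2)) * ∫ y, |η y| := by
  intro x hx
  have hπ := Real.pi_pos
  set b := ‖x - hat q‖ with hbdef
  have hbpos : 0 < b := lt_trans (by positivity) hx
  set C : ℝ := h / (Real.pi * b ^ 2) with hC
  have hCpos : 0 < C := by positivity
  -- key pointwise estimate
  have key : ∀ y, ‖y - q‖ ≤ h → |Phi x (hat y) - Phi x (hat q)| ≤ C := by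
    intro y hy
    set a := ‖x - hat y‖ with hadef
    have hba : |b - a| ≤ h := by
      calc |b - a| ≤ ‖(x - hat q) - (x - hat y)‖ := abs_norm_sub_norm_le _ _
        _ = ‖hat y - hat q‖ := by rw [show (x - hat q) - (x - hat y) = hat y - hat q by abel]
        _ = ‖y - q‖ := hat_norm y q
        _ ≤ h := hy
    have hab2 : b / 2 ≤ a := by
      have : b - a ≤ h := (abs_le.mp hba).2
      linarith
    have hapos : 0 < a := lt_of_lt_of_le (by linarith) hab2
    have hdiff : Phi x (hat y) - Phi x (hat q) = (b - a) / (4 * Real.pi * a * b) := by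
      simp only [Phi, ← hadef, ← hbdef]
      field_simp
    rw [hdiff, abs_div, abs_of_pos (by positivity : (0:ℝ) < 4 * Real.pi * a * b)]
    rw [div_le_iff₀ (by positivity)]
    calc |b - a| ≤ h := hba
      _ ≤ C * (4 * Real.pi * (b/2) * b) := by
          rw [hC]; rw [div_mul_eq_mul_div, le_div_iff₀ (by positivity)]; ring_nf; nlinarith [mul_pos (mul_pos hh hπ) (pow_pos hbpos 2)]
      _ ≤ C * (4 * Real.pi * a * b) := by
          have : 4 * Real.pi * (b/2) * b ≤ 4 * Real.pi * a * b := by nlinarith [mul_nonneg (mul_nonneg (by linarith : (0:ℝ) ≤ a - b/2) (by positivity : (0:ℝ) ≤ 4*Real.pi)) hbpos.le]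
          exact mul_le_mul_of_nonneg_left this hCpos.le
  -- measurability of the kernel
  have hmeasf : Measurable (fun y => Phi x (hat y)) := by
    have : Measurable (fun y : EuclideanSpace ℝ (Fin 2) => ‖x - hat y‖) :=
      (measurable_const.sub hat_meas).norm
    exact measurable_const.div (measurable_const.mul this)
  -- the shifted kernel times η, and its integrability
  set g : EuclideanSpace ℝ (Fin 2) → ℝ := fun y => (Phi x (hat y) - Phi x (hat q)) * η y with hg
  have hbound : ∀ y, ‖g y‖ ≤ C * |η y| := by
    intro y
    by_cases hyy : η y = 0
    · simp [hg, hyy]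
    · have hy : ‖y - q‖ ≤ h := by
        have := hsupp hyy
        simpa [Metric.mem_closedBall, dist_eq_norm] using this
      calc ‖g y‖ = |Phi x (hat y) - Phi x (hat q)| * |η y| := abs_mul _ _
        _ ≤ C * |η y| := mul_le_mul_of_nonneg_right (key y hy) (abs_nonneg _)
  have hgint : Integrable g := by
    refine Integrable.mono' (hint.abs.const_mul C) ?_ (Filter.Eventually.of_forall hbound)
    exact ((hmeasf.sub measurable_const).aestronglyMeasurable.mul hint.1)
  -- reduce to the shifted integral
  have heq : ∫ y, Phi x (hat y) * η y = ∫ y, g y := by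
    have h2 : Integrable (fun y => Phi x (hat q) * η y) := hint.const_mul _
    have : (fun y => Phi x (hat y) * η y) = fun y => g y + Phi x (hat q) * η y := by
      funext y; simp [hg]; ring
    rw [this, integral_add hgint h2, integral_const_mul, hmean, mul_zero, add_zero]
  rw [heq]
  calc |∫ y, g y| ≤ ∫ y, |g y| := by simpa [Real.norm_eq_abs] using norm_integral_le_integral_norm g
    _ ≤ ∫ y, C * |η y| := integral_mono hgint.abs (hint.abs.const_mul C) hbound
    _ = C * ∫ y, |η y| := integral_const_mul _ _
end
end
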